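/- There exist a complex Hilbert space H, a densely defined closed operator T on H, and positive self-adjoint operators P and Q on H with P ∘ P = T* ∘ T and Q ∘ Q = T ∘ T* (i.e., P = |T| and Q = |T*|), such that the self-commutator T ∘ T* − T* ∘ T is unbounded, while P ∘ Q − Q ∘ P is the zero operator on its dense domain (in particular bounded). -/

import Mathlib

/- Unbounded (partially defined) operators on a complex Hilbert space are modelled by
Mathlib's `LinearPMap` (`H →ₗ.[ℂ] H`).  `T†` is the adjoint, `T.IsClosed` means the graph
of `T` is closed, and `f - g` is the difference with domain `D(f) ⊓ D(g)`. -/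

noncomputable section

open LinearPMap

/-- The composition `S ∘ T` of two partially defined linear operators, with its natural
(maximal) domain `{x ∈ D(T) : T x ∈ D(S)}`, acting by `x ↦ S (T x)`. -/
def pComp {R E F G : Type*} [Ring R] [AddCommGroup E] [Module R E]
    [AddCommGroup F] [Module R F] [AddCommGroup G] [Module R G]
    (S : F →ₗ.[R] G) (T : E →ₗ.[R] F) : E →ₗ.[R] G where
  domain := (S.domain.comap T.toFun).map T.domain.subtype
  toFun := (S.toFun.comp (T.toFun.restrict (q := S.domain) fun _ hx => hx)).comp
    (Submodule.equivMapOfInjective T.domain.subtype T.domain.injective_subtype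
      (S.domain.comap T.toFun)).symm.toLinearMap

/-- A partially defined operator is bounded if `‖T x‖ ≤ C‖x‖` on its domain for some `C ≥ 0`. -/
def IsBddOp {H : Type*} [NormedAddCommGroup H] [InnerProductSpace ℂ H]
    (T : H →ₗ.[ℂ] H) : Prop :=
  ∃ C : ℝ, 0 ≤ C ∧ ∀ x : T.domain, ‖T x‖ ≤ C * ‖(x : H)‖

/-- A partially defined operator is positive if `⟪T x, x⟫` is real and nonnegative
for every `x` in its domain. -/
def IsPosOp {H : Type*} [NormedAddCommGroup H] [InnerProductSpace ℂ H]
    (T : H →ₗ.[ℂ] H) : Prop :=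
  ∀ x : T.domain, 0 ≤ (inner ℂ (T x) ((x : H)) : ℂ).re ∧ (inner ℂ (T x) ((x : H)) : ℂ).im = 0

/-- A (bundled) complex Hilbert space. -/
structure HilbertC where
  carrier : Type
  [normed : NormedAddCommGroup carrier]
  [ips : InnerProductSpace ℂ carrier]
  [complete : CompleteSpace carrier]

attribute [instance] HilbertC.normed HilbertC.ips HilbertC.complete

/-- The product Hilbert space `H × H` (with inner product
`⟪(x₁,y₁),(x₂,y₂)⟫ = ⟪x₁,x₂⟫ + ⟪y₁,y₂⟫`), i.e. the `L²`-product `WithLp 2 (H × H)`. -/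
abbrev HxH (H : Type) [NormedAddCommGroup H] [InnerProductSpace ℂ H] : Type :=
  WithLp 2 (H × H)

/-- The canonical linear identification of the product Hilbert space `HxH H` with `H × H`. -/
abbrev prodE (H : Type) [NormedAddCommGroup H] [InnerProductSpace ℂ H] :
    HxH H ≃ₗ[ℂ] H × H := WithLp.linearEquiv 2 ℂ (H × H)

/-! On `ℓ²(ℕ ⊕ ℕ)` let `T e_{inr n} = (n + 1) e_{inl n}` and `T e_{inl n} = 0`. This is a weighted
composition operator `x ↦ c · (x ∘ τ)` (with `τ` the swap of the two copies of `ℕ`), and the adjoint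
of such an operator is again one. Hence `T† ∘ T` and `T ∘ T†` are the diagonal operators with
weights `(n + 1)²` on the right, resp. left, copy of `ℕ`. Their square roots `P = |T|` and
`Q = |T†|` are diagonal with disjoint supports, so `P ∘ Q = Q ∘ P = 0`, whereas
`T ∘ T† - T† ∘ T = diag((n + 1)², -(n + 1)²)` is unbounded. -/

open scoped lp ENNReal ComplexOrder ComplexConjugate

section pComp

variable {R E F G : Type*} [Ring R] [AddCommGroup E] [Module R E]
    [AddCommGroup F] [Module R F] [AddCommGroup G] [Module R G]

lemma mem_domain_pComp {S : F →ₗ.[R] G} {T : E →ₗ.[R] F} {x : E} :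
    x ∈ (pComp S T).domain ↔ ∃ hx : x ∈ T.domain, T ⟨x, hx⟩ ∈ S.domain := by
  simp only [pComp, Submodule.mem_map, Submodule.mem_comap, LinearPMap.toFun_eq_coe]
  exact ⟨fun ⟨y, hy, hyx⟩ => hyx ▸ ⟨y.2, hy⟩, fun ⟨hx, hTx⟩ => ⟨⟨x, hx⟩, hTx, rfl⟩⟩

lemma pComp_apply (S : F →ₗ.[R] G) (T : E →ₗ.[R] F) (x : (pComp S T).domain)
    (hx : (x : E) ∈ T.domain) (hTx : T ⟨x, hx⟩ ∈ S.domain) :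
    pComp S T x = S ⟨T ⟨x, hx⟩, hTx⟩ := by
  obtain ⟨_, y, hy, rfl⟩ := x
  have hsymm : (Submodule.equivMapOfInjective T.domain.subtype T.domain.injective_subtype
      (S.domain.comap T.toFun)).symm ⟨_, y, hy, rfl⟩ = ⟨y, hy⟩ :=
    (LinearEquiv.symm_apply_eq _).2 rfl
  change S.toFun ⟨T.toFun ((Submodule.equivMapOfInjective T.domain.subtype
      T.domain.injective_subtype (S.domain.comap T.toFun)).symm ⟨_, y, hy, rfl⟩), _⟩ = _
  simp only [hsymm, LinearPMap.toFun_eq_coe]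
  rfl

end pComp

section lp

variable {ι : Type*} {E : ι → Type*} [∀ i, NormedAddCommGroup (E i)] {p : ℝ≥0∞}

lemma Memℓp.comp_equiv {f : ∀ i, E i} (hf : Memℓp f p) (π : ι ≃ ι) :
    Memℓp (fun i => f (π i)) p := by
  obtain (rfl | rfl | hp) := p.trichotomy
  · exact memℓp_zero (hf.finite_dsupport.preimage π.injective.injOn)
  · refine memℓp_infty ?_
    rw [show (Set.range fun i => ‖f (π i)‖) = Set.range fun i => ‖f i‖ from
      π.surjective.range_comp fun i => ‖f i‖]
    exact hf.bddAbove
  · exact memℓp_gen ((π.summable_iff (f := fun i => ‖f i‖ ^ p.toReal)).2 (hf.summable hp))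

lemma dense_of_forall_single_mem [Fact (1 ≤ p)] (hp : p ≠ ⊤) [DecidableEq ι]
    (D : AddSubmonoid (lp E p)) (hD : ∀ i a, lp.single p i a ∈ D) : Dense (D : Set (lp E p)) :=
  fun f => mem_closure_of_tendsto (lp.hasSum_single hp f)
    (Filter.Eventually.of_forall fun _ => sum_mem fun i _ => hD i (f i))

end lp

section weightedComp

variable {𝕜 : Type*} [RCLike 𝕜] {ι : Type*}

def weightedCompDomain (c : ι → 𝕜) (τ : ι ≃ ι) : Submodule 𝕜 ℓ²(ι, 𝕜) where
  carrier := {x | Memℓp (fun i => c i * x (τ i)) 2}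
  zero_mem' := by simpa using zero_mem_ℓp'
  add_mem' {x y} hx hy := by
    change Memℓp (fun i => c i * (x + y : ℓ²(ι, 𝕜)) (τ i)) 2
    convert hx.add hy using 1
    ext i
    simp [mul_add]
  smul_mem' a x hx := by simpa [mul_left_comm] using hx.const_mul a

def weightedComp (c : ι → 𝕜) (τ : ι ≃ ι) : ℓ²(ι, 𝕜) →ₗ.[𝕜] ℓ²(ι, 𝕜) where
  domain := weightedCompDomain c τ
  toFun :=
    { toFun x := ⟨fun i => c i * (x : ℓ²(ι, 𝕜)) (τ i), x.2⟩
      map_add' x y := lp.ext <| funext fun i => by simp [mul_add]; rfl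
      map_smul' a x := lp.ext <| funext fun i => by simp [mul_left_comm] }

variable {c d : ι → 𝕜} {τ ρ : ι ≃ ι}

lemma mem_domain_weightedComp {x : ℓ²(ι, 𝕜)} :
    x ∈ (weightedComp c τ).domain ↔ Memℓp (fun i => c i * x (τ i)) 2 := Iff.rfl

@[simp]
lemma weightedComp_apply (x : (weightedComp c τ).domain) (i : ι) :
    weightedComp c τ x i = c i * (x : ℓ²(ι, 𝕜)) (τ i) := rfl

lemma single_mem_domain_weightedComp [DecidableEq ι] (j : ι) (a : 𝕜) :
    lp.single 2 j a ∈ (weightedComp c τ).domain := by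
  refine (memℓp_zero ((Set.finite_singleton (τ.symm j)).subset fun i hi => ?_)).of_exponent_ge
    zero_le
  by_contra hij
  have : τ i ≠ j := fun h => hij (τ.symm_apply_eq.2 h.symm).symm
  simp [lp.single_apply, Pi.single_eq_of_ne this] at hi

lemma weightedComp_single [DecidableEq ι] (j : ι) (a : 𝕜) :
    weightedComp c τ ⟨lp.single 2 j a, single_mem_domain_weightedComp j a⟩
      = lp.single 2 (τ.symm j) (c (τ.symm j) * a) := by
  ext i
  rcases eq_or_ne i (τ.symm j) with rfl | hij
  · simp
  · have : τ i ≠ j := fun h => hij (τ.symm_apply_eq.2 h.symm).symm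
    simp [lp.single_apply, Pi.single_eq_of_ne this, Pi.single_eq_of_ne hij]

lemma dense_domain_weightedComp : Dense ((weightedComp c τ).domain : Set ℓ²(ι, 𝕜)) := by
  classical
  exact dense_of_forall_single_mem ENNReal.ofNat_ne_top (weightedComp c τ).domain.toAddSubmonoid
    single_mem_domain_weightedComp

lemma isClosed_weightedComp : (weightedComp c τ).IsClosed := by
  have hgraph : ((weightedComp c τ).graph : Set (ℓ²(ι, 𝕜) × ℓ²(ι, 𝕜))) =
      ⋂ i, {z | z.2 i = c i * z.1 (τ i)} := by
    ext ⟨x, y⟩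
    simp only [SetLike.mem_coe, LinearPMap.mem_graph_iff, Set.mem_iInter, Set.mem_ofPred_eq]
    constructor
    · rintro ⟨x, rfl, rfl⟩ i
      rfl
    · intro h
      have hy : (fun i => c i * x (τ i)) = ⇑y := funext fun i => (h i).symm
      exact ⟨⟨x, (mem_domain_weightedComp.2 (hy ▸ y.2))⟩, rfl, lp.ext hy⟩
  rw [LinearPMap.IsClosed, hgraph]
  refine isClosed_iInter fun i => isClosed_eq ?_ ?_
  · exact (lp.lipschitzWith_one_eval 2 i).continuous.comp continuous_snd
  · exact continuous_const.mul ((lp.lipschitzWith_one_eval 2 (τ i)).continuous.comp continuous_fst)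

lemma isFormalAdjoint_weightedComp :
    (weightedComp c τ).IsFormalAdjoint (weightedComp (fun i => conj (c (τ.symm i))) τ.symm) := by
  intro x y
  rw [lp.inner_eq_tsum, lp.inner_eq_tsum]
  refine (tsum_congr fun i => ?_).trans (τ.tsum_eq fun j => inner 𝕜 ((x : ℓ²(ι, 𝕜)) j)
    (weightedComp (fun i => conj (c (τ.symm i))) τ.symm y j))
  simp only [RCLike.inner_apply, weightedComp_apply, Equiv.symm_apply_apply, map_mul]
  ring

lemma adjoint_weightedComp :
    (weightedComp c τ)† = weightedComp (fun i => conj (c (τ.symm i))) τ.symm := by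
  classical
  have hle : weightedComp (fun i => conj (c (τ.symm i))) τ.symm ≤ (weightedComp c τ)† :=
    isFormalAdjoint_weightedComp.le_adjoint dense_domain_weightedComp
  refine (LinearPMap.eq_of_le_of_domain_eq hle (le_antisymm hle.1 fun y hy => ?_)).symm
  -- testing `T† y` against `single j 1` identifies its `j`-th coordinate
  have hcoord : ∀ j, conj (c (τ.symm j)) * y (τ.symm j) = (weightedComp c τ)† ⟨y, hy⟩ j := by
    intro j
    have h := (weightedComp c τ).adjoint_isFormalAdjoint dense_domain_weightedComp ⟨y, hy⟩
      ⟨lp.single 2 j 1, single_mem_domain_weightedComp j 1⟩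
    rw [weightedComp_single, lp.inner_single_right, lp.inner_single_right] at h
    simp only [RCLike.inner_apply, one_mul] at h
    simpa using (congrArg conj h).symm
  exact mem_domain_weightedComp.2 (by rw [funext hcoord]; exact lp.memℓp _)

lemma mem_domain_pComp_weightedComp {x : ℓ²(ι, 𝕜)} :
    x ∈ (pComp (weightedComp c τ) (weightedComp d ρ)).domain ↔
      x ∈ (weightedComp d ρ).domain ∧ Memℓp (fun i => c i * d (τ i) * x (ρ (τ i))) 2 := by
  simp only [mem_domain_pComp, mem_domain_weightedComp (x := weightedComp d ρ _),
    weightedComp_apply, mul_assoc, exists_prop]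

lemma pComp_weightedComp_apply (x : (pComp (weightedComp c τ) (weightedComp d ρ)).domain)
    (i : ι) :
    pComp (weightedComp c τ) (weightedComp d ρ) x i = c i * d (τ i) * (x : ℓ²(ι, 𝕜)) (ρ (τ i)) := by
  obtain ⟨hx, hdx⟩ := mem_domain_pComp.1 x.2
  rw [pComp_apply _ _ x hx hdx, weightedComp_apply, weightedComp_apply, mul_assoc]

lemma single_mem_domain_pComp_weightedComp [DecidableEq ι] (j : ι) (a : 𝕜) :
    lp.single 2 j a ∈ (pComp (weightedComp c τ) (weightedComp d ρ)).domain :=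
  mem_domain_pComp.2 ⟨single_mem_domain_weightedComp j a,
    weightedComp_single (c := d) j a ▸ single_mem_domain_weightedComp _ _⟩

lemma mem_domain_weightedComp_of_memℓp_mul (hb : ∀ i, ‖d (τ i)‖ ≤ 1 + ‖c i * d (τ i)‖)
    {x : ℓ²(ι, 𝕜)} (hx : Memℓp (fun i => c i * d (τ i) * x (ρ (τ i))) 2) :
    x ∈ (weightedComp d ρ).domain := by
  have hxτ : Memℓp (fun i => x (ρ (τ i))) 2 := (lp.memℓp x).comp_equiv (τ.trans ρ)
  have hdτ : Memℓp (fun i => d (τ i) * x (ρ (τ i))) 2 := by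
    refine (hxτ.norm.add hx.norm).mono fun i => ?_
    change _ ≤ ‖x (ρ (τ i))‖ + ‖c i * d (τ i) * x (ρ (τ i))‖
    calc ‖d (τ i) * x (ρ (τ i))‖ ≤ (1 + ‖c i * d (τ i)‖) * ‖x (ρ (τ i))‖ := by
          rw [norm_mul]; gcongr; exact hb i
      _ = _ := by rw [norm_mul (c i * d (τ i))]; ring
  have := hdτ.comp_equiv τ.symm
  simp only [Equiv.apply_symm_apply] at this
  exact mem_domain_weightedComp.2 this

lemma pComp_weightedComp (hb : ∀ i, ‖d (τ i)‖ ≤ 1 + ‖c i * d (τ i)‖) :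
    pComp (weightedComp c τ) (weightedComp d ρ)
      = weightedComp (fun i => c i * d (τ i)) (τ.trans ρ) := by
  refine LinearPMap.ext (Submodule.ext fun x => ?_) fun x hx hx' => ?_
  · rw [mem_domain_pComp_weightedComp, mem_domain_weightedComp]
    exact ⟨And.right, fun hx => ⟨mem_domain_weightedComp_of_memℓp_mul hb hx, hx⟩⟩
  · ext i
    rw [pComp_weightedComp_apply, weightedComp_apply]
    rfl

lemma pComp_weightedComp_apply_eq_zero (h : ∀ i, c i * d (τ i) = 0)
    (x : (pComp (weightedComp c τ) (weightedComp d ρ)).domain) :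
    pComp (weightedComp c τ) (weightedComp d ρ) x = 0 := by
  ext i
  rw [pComp_weightedComp_apply, h, zero_mul, lp.coeFn_zero, Pi.zero_apply]

lemma sub_pComp_weightedComp_refl_apply_eq_zero (h : ∀ i, c i * d i = 0)
    (x : (pComp (weightedComp c (Equiv.refl ι)) (weightedComp d (Equiv.refl ι))
      - pComp (weightedComp d (Equiv.refl ι)) (weightedComp c (Equiv.refl ι))).domain) :
    (pComp (weightedComp c (Equiv.refl ι)) (weightedComp d (Equiv.refl ι))
      - pComp (weightedComp d (Equiv.refl ι)) (weightedComp c (Equiv.refl ι))) x = 0 := by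
  rw [LinearPMap.sub_apply, pComp_weightedComp_apply_eq_zero h,
    pComp_weightedComp_apply_eq_zero fun i => (mul_comm _ _).trans (h i), sub_zero]

lemma norm_le_one_add_norm_mul_self (z : 𝕜) : ‖z‖ ≤ 1 + ‖z * z‖ := by
  rw [norm_mul]
  nlinarith [sq_nonneg (‖z‖ - 1)]

lemma pComp_weightedComp_refl_self :
    pComp (weightedComp c (Equiv.refl ι)) (weightedComp c (Equiv.refl ι))
      = weightedComp (fun i => c i * c i) (Equiv.refl ι) :=
  pComp_weightedComp fun i => norm_le_one_add_norm_mul_self (c i)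

lemma adjoint_weightedComp_refl (hc : ∀ i, conj (c i) = c i) :
    (weightedComp c (Equiv.refl ι))† = weightedComp c (Equiv.refl ι) := by
  simp only [adjoint_weightedComp, Equiv.refl_symm, Equiv.refl_apply, hc]

end weightedComp

section complex

variable {ι : Type*} {c d : ι → ℂ}

lemma isPosOp_weightedComp_refl (hc : ∀ i, 0 ≤ c i) : IsPosOp (weightedComp c (Equiv.refl ι)) := by
  intro x
  have hterm : ∀ i, 0 ≤ inner ℂ (c i * (x : ℓ²(ι, ℂ)) i) ((x : ℓ²(ι, ℂ)) i) := fun i => by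
    rw [RCLike.inner_apply, map_mul, Complex.conj_eq_iff_im.2 (Complex.nonneg_iff.1 (hc i)).2.symm,
      mul_left_comm, RCLike.mul_conj]
    exact mul_nonneg (hc i) (by norm_cast; positivity)
  have hinner : 0 ≤ inner ℂ (weightedComp c (Equiv.refl ι) x) (x : ℓ²(ι, ℂ)) := by
    rw [lp.inner_eq_tsum]
    exact tsum_nonneg hterm
  exact ⟨(Complex.nonneg_iff.1 hinner).1, (Complex.nonneg_iff.1 hinner).2.symm⟩

lemma IsBddOp.bddAbove_norm_sub_weightedComp_refl
    (h : IsBddOp (weightedComp c (Equiv.refl ι) - weightedComp d (Equiv.refl ι))) :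
    BddAbove (Set.range fun i => ‖c i - d i‖) := by
  classical
  obtain ⟨C, -, hC⟩ := h
  refine ⟨C, Set.forall_mem_range.2 fun j => ?_⟩
  set S := weightedComp c (Equiv.refl ι) - weightedComp d (Equiv.refl ι)
  have hj : (lp.single 2 j 1 : ℓ²(ι, ℂ)) ∈ S.domain :=
    ⟨single_mem_domain_weightedComp j 1, single_mem_domain_weightedComp j 1⟩
  calc ‖c j - d j‖ = ‖S ⟨_, hj⟩ j‖ := by simp [S, LinearPMap.sub_apply]
    _ ≤ ‖S ⟨_, hj⟩‖ := lp.norm_apply_le_norm two_ne_zero _ _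
    _ ≤ C * ‖(lp.single 2 j 1 : ℓ²(ι, ℂ))‖ := hC _
    _ = C := by rw [lp.norm_single two_pos, norm_one, mul_one]

end complex

lemma Equiv.sumComm_trans_sumComm (α β : Type*) :
    (Equiv.sumComm α β).trans (Equiv.sumComm β α) = Equiv.refl (α ⊕ β) :=
  Equiv.ext Sum.swap_swap

section swap

local notation "σ" => Equiv.sumComm ℕ ℕ

def leftWeight : ℕ ⊕ ℕ → ℂ := Sum.elim (fun n => n + 1) 0

lemma leftWeight_nonneg (i : ℕ ⊕ ℕ) : 0 ≤ leftWeight i := by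
  cases i <;> simp [leftWeight]
  positivity

lemma conj_leftWeight (i : ℕ ⊕ ℕ) : conj (leftWeight i) = leftWeight i :=
  Complex.conj_eq_iff_im.2 (Complex.nonneg_iff.1 (leftWeight_nonneg i)).2.symm

lemma adjoint_weightedComp_leftWeight :
    (weightedComp leftWeight σ)† = weightedComp (fun i => leftWeight (σ i)) σ := by
  simp only [adjoint_weightedComp, Equiv.sumComm_symm, conj_leftWeight]

lemma pComp_adjoint_weightedComp_leftWeight :
    pComp (weightedComp leftWeight σ)† (weightedComp leftWeight σ)
      = weightedComp (fun i => leftWeight (σ i) * leftWeight (σ i)) (Equiv.refl _) := by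
  rw [adjoint_weightedComp_leftWeight,
    pComp_weightedComp fun i => norm_le_one_add_norm_mul_self _, Equiv.sumComm_trans_sumComm]

lemma pComp_weightedComp_leftWeight_adjoint :
    pComp (weightedComp leftWeight σ) (weightedComp leftWeight σ)†
      = weightedComp (fun i => leftWeight i * leftWeight i) (Equiv.refl _) := by
  rw [adjoint_weightedComp_leftWeight, pComp_weightedComp fun i => by
    simpa using norm_le_one_add_norm_mul_self (leftWeight i), Equiv.sumComm_trans_sumComm]
  simp

lemma not_bddAbove_leftWeight :
    ¬ BddAbove (Set.range fun i => ‖leftWeight i * leftWeight i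
      - leftWeight (σ i) * leftWeight (σ i)‖) := by
  rintro ⟨C, hC⟩
  obtain ⟨n, hn⟩ := exists_nat_gt C
  have := hC ⟨Sum.inl n, rfl⟩
  have hnorm : ‖(n : ℂ) + 1‖ = n + 1 := by norm_cast
  simp only [leftWeight, Equiv.sumComm_apply, Sum.swap_inl, Sum.elim_inl, Sum.elim_inr,
    Pi.zero_apply, mul_zero, sub_zero, norm_mul, hnorm] at this
  nlinarith

end swap

/-- There exist a complex Hilbert space `H`, a densely defined closed operator `T`, and positive
self-adjoint operators `P`, `Q` with `P ∘ P = T† ∘ T` and `Q ∘ Q = T ∘ T†` (i.e. `P = |T|` and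
`Q = |T†|`), such that the self-commutator `T ∘ T† - T† ∘ T` is unbounded while `P ∘ Q - Q ∘ P`
is the zero operator on its dense domain (in particular bounded). -/
theorem stmt_6 :
    ∃ (𝓗 : HilbertC) (T P Q : 𝓗.carrier →ₗ.[ℂ] 𝓗.carrier),
      Dense (T.domain : Set 𝓗.carrier) ∧ T.IsClosed ∧
      IsPosOp P ∧ P† = P ∧ pComp P P = pComp (T†) T ∧
      IsPosOp Q ∧ Q† = Q ∧ pComp Q Q = pComp T (T†) ∧
      ¬ IsBddOp (pComp T (T†) - pComp (T†) T) ∧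
      Dense ((pComp P Q - pComp Q P).domain : Set 𝓗.carrier) ∧
      (∀ z : (pComp P Q - pComp Q P).domain, (pComp P Q - pComp Q P) z = 0) ∧
      IsBddOp (pComp P Q - pComp Q P) := by
  set P := weightedComp (fun i => leftWeight (Equiv.sumComm ℕ ℕ i)) (Equiv.refl (ℕ ⊕ ℕ))
  set Q := weightedComp leftWeight (Equiv.refl (ℕ ⊕ ℕ))
  have hcomm : ∀ z : (pComp P Q - pComp Q P).domain, (pComp P Q - pComp Q P) z = 0 :=
    sub_pComp_weightedComp_refl_apply_eq_zero fun i => by cases i <;> simp [leftWeight]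
  refine ⟨⟨ℓ²(ℕ ⊕ ℕ, ℂ)⟩, weightedComp leftWeight (Equiv.sumComm ℕ ℕ), P, Q,
    dense_domain_weightedComp, isClosed_weightedComp,
    isPosOp_weightedComp_refl fun i => leftWeight_nonneg _,
    adjoint_weightedComp_refl fun i => conj_leftWeight _,
    by rw [pComp_weightedComp_refl_self, pComp_adjoint_weightedComp_leftWeight],
    isPosOp_weightedComp_refl leftWeight_nonneg,
    adjoint_weightedComp_refl conj_leftWeight,
    by rw [pComp_weightedComp_refl_self, pComp_weightedComp_leftWeight_adjoint],
    ?_, dense_of_forall_single_mem ENNReal.ofNat_ne_top _ fun j a =>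
      ⟨single_mem_domain_pComp_weightedComp j a, single_mem_domain_pComp_weightedComp j a⟩,
    hcomm, ⟨0, le_rfl, fun z => by rw [hcomm z, norm_zero, zero_mul]⟩⟩
  rw [pComp_adjoint_weightedComp_leftWeight, pComp_weightedComp_leftWeight_adjoint]
  exact fun h => not_bddAbove_leftWeight h.bddAbove_norm_sub_weightedComp_refl
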